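/- arXiv:2603.08576 — 4 statements merged into one kernel-verified Lean document; each statement's English description precedes it below -/
import Mathlib

section
/- For every a > 0, the set M*_a := {w ∈ C([0,a],ℝ) : w(0) = 0 and ρ(w) = a} is a Borel subset of C([0,a],ℝ). -/
open Set Filter MeasureTheory Topology UniformConvergence

noncomputable section

/-- Supremum of `f` over the interval `[s,t]`. -/
def maxOnIcc (f : ℝ → ℝ) (s t : ℝ) : ℝ := sSup (f '' Set.Icc s t)

/-- Infimum of `f` over the interval `[s,t]`. -/
def minOnIcc (f : ℝ → ℝ) (s t : ℝ) : ℝ := sInf (f '' Set.Icc s t)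

/-- `ρ(w)`: the first time in `[0,a]` at which `f` attains its maximum over `[0,a]`. -/
def rho (a : ℝ) (f : ℝ → ℝ) : ℝ := sInf {s | s ∈ Set.Icc 0 a ∧ f s = maxOnIcc f 0 a}

/-- membership in `B_a`: continuous bridges of length `a`. -/
def IsBridge (a : ℝ) (f : ℝ → ℝ) : Prop :=
  ContinuousOn f (Set.Icc 0 a) ∧ f 0 = 0 ∧ f a = 0

/-- membership in `B*_a`: bridges whose maximum is attained at a unique point. -/
def IsBridgeStar (a : ℝ) (f : ℝ → ℝ) : Prop :=
  IsBridge a f ∧ ∃! s, s ∈ Set.Icc 0 a ∧ ∀ u ∈ Set.Icc 0 a, f u ≤ f s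

/-- membership in `M_a`. -/
def IsMeander (a : ℝ) (f : ℝ → ℝ) : Prop :=
  ContinuousOn f (Set.Icc 0 a) ∧ f 0 = 0 ∧ ∀ s ∈ Set.Icc 0 a, f s ≤ f a

/-- membership in `M*_a`. -/
def IsMeanderStar (a : ℝ) (f : ℝ → ℝ) : Prop :=
  ContinuousOn f (Set.Icc 0 a) ∧ f 0 = 0 ∧ rho a f = a

/-- The transformation `T^me_a`. -/
def Tme (a : ℝ) (f : ℝ → ℝ) : ℝ → ℝ := fun t =>
  if t ≤ rho a f then f t else f (rho a f) + f (a + rho a f - t)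

/-- `γ_{f(a)/2}`: the first time in `[0,a]` at which `f` hits the level `f(a)/2`. -/
def gammaHalf (a : ℝ) (f : ℝ → ℝ) : ℝ := sInf {s | s ∈ Set.Icc 0 a ∧ f s = f a / 2}

/-- The transformation `T^br_a`. -/
def Tbr (a : ℝ) (f : ℝ → ℝ) : ℝ → ℝ := fun t =>
  if t ≤ gammaHalf a f then f t else f (a + gammaHalf a f - t) - f (gammaHalf a f)

/-- The Brownian scaling map `S_b`. -/
def scaleMap (b : ℝ) (f : ℝ → ℝ) : ℝ → ℝ := fun t => (Real.sqrt b)⁻¹ * f (b * t)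

/-- `m^br_t(w)` (for bridges of length `1`). -/
def mbr (f : ℝ → ℝ) (t : ℝ) : ℝ := if t ≤ rho 1 f then maxOnIcc f 0 t else maxOnIcc f t 1

/-- `g^br_t(w)`: left endpoint of the excursion of `m^br(w) - w` straddling `t`. -/
def gbr (f : ℝ → ℝ) (t : ℝ) : ℝ := sSup {s | s ∈ Set.Icc 0 t ∧ mbr f s - f s = 0}

/-- `d^br_t(w)`: right endpoint of the excursion of `m^br(w) - w` straddling `t`,
with the convention `d^br_1(w) = 1`. -/
def dbr (f : ℝ → ℝ) (t : ℝ) : ℝ :=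
  if t = 1 then 1 else sInf {s | s ∈ Set.Ioc t 1 ∧ mbr f s - f s = 0}

/-- `r^br_t(w)`: maximum of `m^br(w) - w` over the excursion interval. -/
def rbr (f : ℝ → ℝ) (t : ℝ) : ℝ :=
  sSup ((fun s => mbr f s - f s) '' Set.Icc (gbr f t) (dbr f t))

/-- `u^br_t(w)`: Lebesgue time spent, up to time `t`, in non-excised excursions. -/
def ubr (f : ℝ → ℝ) (t : ℝ) : ℝ := ∫ s in (0:ℝ)..t, if rbr f s < mbr f s then (1:ℝ) else 0

/-- `α^br_s(w)`, with the convention `α^br_{u^br_1(w)}(w) = 1`. -/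
def abr (f : ℝ → ℝ) (s : ℝ) : ℝ :=
  if s = ubr f 1 then 1 else sInf {t | t ∈ Set.Icc (0:ℝ) 1 ∧ s < ubr f t}

/-- `H^br(w)` (as a function; it is relevant on `[0, u^br_1(w)]`). -/
def Hbr (f : ℝ → ℝ) : ℝ → ℝ := fun t => f (abr f t)

/-- `G^br(w)`. -/
def Gbr (f : ℝ → ℝ) : ℝ → ℝ := if 0 < ubr f 1 then scaleMap (ubr f 1) (Hbr f) else 0

/-- the past-maximum function `w̄`. -/
def pastMax (f : ℝ → ℝ) (t : ℝ) : ℝ := maxOnIcc f 0 t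

/-- `g^me_t(w)`. -/
def gme (f : ℝ → ℝ) (t : ℝ) : ℝ := sSup {s | s ∈ Set.Icc 0 t ∧ pastMax f s - f s = 0}

/-- `d^me_t(w)`, with the convention `d^me_1(w) = 1`. -/
def dme (f : ℝ → ℝ) (t : ℝ) : ℝ :=
  if t = 1 then 1 else sInf {s | s ∈ Set.Ioc t 1 ∧ pastMax f s - f s = 0}

/-- `r^me_t(w)`. -/
def rme (f : ℝ → ℝ) (t : ℝ) : ℝ :=
  sSup ((fun s => pastMax f s - f s) '' Set.Icc (gme f t) (dme f t))

/-- `u^me_t(w)`. -/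
def ume (f : ℝ → ℝ) (t : ℝ) : ℝ :=
  if t ≤ gammaHalf 1 f then ∫ s in (0:ℝ)..t, if rme f s < pastMax f s then (1:ℝ) else 0
  else (∫ s in (0:ℝ)..gammaHalf 1 f, if rme f s < pastMax f s then (1:ℝ) else 0) +
    ∫ s in gammaHalf 1 f..t, if rme f s < pastMax f s - f 1 / 2 then (1:ℝ) else 0

/-- `α^me_s(w)`, with the convention `α^me_{u^me_1(w)}(w) = 1`. -/
def ame (f : ℝ → ℝ) (s : ℝ) : ℝ :=
  if s = ume f 1 then 1 else sInf {t | t ∈ Set.Icc (0:ℝ) 1 ∧ s < ume f t}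

/-- `H^me(w)`. -/
def Hme (f : ℝ → ℝ) : ℝ → ℝ := fun t => f (ame f t)

/-- `G^me(w)`. -/
def Gme (f : ℝ → ℝ) : ℝ → ℝ := if 0 < ume f 1 then scaleMap (ume f 1) (Hme f) else 0

/-- Regularity property (i): uniqueness of one-sided maximizers at rational times. -/
def UniqueOneSidedMax (f : ℝ → ℝ) : Prop :=
  ∀ t : ℚ, (t : ℝ) ∈ Set.Icc (0:ℝ) 1 →
    (∃! s, s ∈ Set.Icc (0:ℝ) (t:ℝ) ∧ ∀ u ∈ Set.Icc (0:ℝ) (t:ℝ), f u ≤ f s) ∧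
    (∃! s, s ∈ Set.Icc ((t:ℝ)) 1 ∧ ∀ u ∈ Set.Icc ((t:ℝ)) 1, f u ≤ f s)

/-- Regularity property (ii): the level `0` is not a strict local minimum of `f` on `[0,1]`. -/
def NoStrictLocalMinAtZero (f : ℝ → ℝ) : Prop :=
  ¬ ∃ t ∈ Set.Icc (0:ℝ) 1, f t = 0 ∧
      ∃ δ > 0, ∀ s ∈ Set.Icc (0:ℝ) 1, s ≠ t → |s - t| < δ → f t < f s

/-- `w ∈ B^reg_1`. -/
def Regular (f : ℝ → ℝ) : Prop :=
  IsBridge 1 f ∧ UniqueOneSidedMax f ∧ NoStrictLocalMinAtZero f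

/-!
For continuous `w`, `ρ(w) = a` holds exactly when `w s < w a` for every `s < a`. By density of
the rationals this is the countable conjunction, over rational `q < a`, of `w < w a` on the compact
interval `[0, q]`; each of these conditions is open in the uniform topology. Together with the
closed condition `w 0 = 0`, this exhibits `M*_a` as a `G_δ` set.
-/

theorem maxOnIcc_eq_of_isMaxOn {f : ℝ → ℝ} {b c s : ℝ} (hs : s ∈ Icc b c)
    (h : IsMaxOn f (Icc b c) s) : maxOnIcc f b c = f s :=
  IsGreatest.csSup_eq ⟨mem_image_of_mem f hs, forall_mem_image.2 h⟩

theorem rho_le_of_isMaxOn {f : ℝ → ℝ} {a s : ℝ} (hs : s ∈ Icc 0 a)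
    (h : IsMaxOn f (Icc 0 a) s) : rho a f ≤ s :=
  csInf_le ⟨0, fun _ ht => ht.1.1⟩ ⟨hs, (maxOnIcc_eq_of_isMaxOn hs h).symm⟩

theorem rho_eq_self_iff {f : ℝ → ℝ} {a : ℝ} (ha : 0 ≤ a) (hf : ContinuousOn f (Icc 0 a)) :
    rho a f = a ↔ ∀ s ∈ Ico 0 a, f s < f a := by
  have ha_mem : a ∈ Icc 0 a := right_mem_Icc.2 ha
  constructor
  · intro hrho s hs
    by_contra! hle
    obtain ⟨m, hm, hmax⟩ := isCompact_Icc.exists_isMaxOn ⟨0, left_mem_Icc.2 ha⟩ hf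
    have hm_eq : m = a := le_antisymm hm.2 (hrho ▸ rho_le_of_isMaxOn hm hmax)
    have hs_max : IsMaxOn f (Icc 0 a) s := fun u hu => (hm_eq ▸ hmax hu).trans hle
    linarith [rho_le_of_isMaxOn (Ico_subset_Icc_self hs) hs_max, hs.2]
  · intro hlt
    have ha_max : IsMaxOn f (Icc 0 a) a := fun u hu =>
      hu.2.eq_or_lt.elim (fun h => (congrArg f h).le) fun h => (hlt u ⟨hu.1, h⟩).le
    refine le_antisymm (rho_le_of_isMaxOn ha_mem ha_max) (le_csInf ⟨a, ha_mem, ?_⟩ ?_)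
    · exact maxOnIcc_eq_of_isMaxOn ha_mem ha_max |>.symm
    · rintro t ⟨ht, hft⟩
      by_contra! hta
      rw [maxOnIcc_eq_of_isMaxOn ha_mem ha_max] at hft
      exact (hlt t ⟨ht.1, hta⟩).ne hft

theorem forall_mem_Ico_iff_forall_rat {p : ℝ → Prop} {b c : ℝ} :
    (∀ s ∈ Ico b c, p s) ↔ ∀ q : {q : ℚ // (q : ℝ) < c}, ∀ s ∈ Icc b (q : ℝ), p s := by
  refine ⟨fun h q s hs => h s ⟨hs.1, hs.2.trans_lt q.2⟩, fun h s hs => ?_⟩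
  obtain ⟨q, hsq, hqc⟩ := exists_rat_btwn hs.2
  exact h ⟨q, hqc⟩ s ⟨hs.1, hsq.le⟩

theorem ContinuousMap.isOpen_setOf_forall_lt_apply {X : Type*} [TopologicalSpace X]
    {K : Set X} (hK : IsCompact K) (x₀ : X) :
    IsOpen {w : C(X, ℝ) | ∀ x ∈ K, w x < w x₀} := by
  have hcont : Continuous fun w : C(X, ℝ) => w - ContinuousMap.const X (w x₀) := by fun_prop
  convert (ContinuousMap.isOpen_setOfPred_mapsTo hK (isOpen_Iio (a := (0 : ℝ)))).preimage hcont
    using 1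
  ext w
  simp [MapsTo]

/-- `M*_a` is a Borel subset of `C([0,a],ℝ)`. -/
theorem stmt4 (a : ℝ) (ha : 0 < a) :
    MeasurableSet[borel C(Set.Icc (0:ℝ) a, ℝ)]
      {w : C(Set.Icc (0:ℝ) a, ℝ) | IsMeanderStar a (Set.IccExtend ha.le ⇑w)} := by
  borelize C(Icc (0:ℝ) a, ℝ)
  set π := projIcc 0 a ha.le
  have hset : {w : C(Icc (0:ℝ) a, ℝ) | IsMeanderStar a (IccExtend ha.le ⇑w)} =
      {w | w (π 0) = 0} ∩
        ⋂ q : {q : ℚ // (q : ℝ) < a}, {w | ∀ x ∈ π '' Icc 0 (q : ℝ), w x < w (π a)} := by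
    ext w
    have hf : Continuous (IccExtend ha.le ⇑w) := w.continuous.Icc_extend'
    simp only [IsMeanderStar, rho_eq_self_iff ha.le hf.continuousOn, forall_mem_Ico_iff_forall_rat,
      hf.continuousOn, true_and, mem_inter_iff, mem_iInter, mem_ofPred_eq, forall_mem_image]
    rfl -- `IccExtend ha.le w` is `w ∘ π` by definition
  rw [hset]
  refine (isClosed_eq (continuous_eval_const _) continuous_const).measurableSet.inter
    (.iInter fun q => (ContinuousMap.isOpen_setOf_forall_lt_apply ?_ _).measurableSet)
  exact isCompact_Icc.image continuous_projIcc
end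
end

section
/- The set M^reg_1 := {w ∈ M_1 : T^br(w) ∈ B^reg_1} is a Borel subset of C([0,1],ℝ). -/
open Set Filter MeasureTheory Topology UniformConvergence

noncomputable section

/-!
On the closed set of meanders, `γ` is a measurable function of `w`, because `γ ≤ c` holds exactly
when the maximum of `w` over `[0, c]` reaches `w(1)/2`; hence every evaluation `w ↦ T^br(w)(r)`
is measurable, and `T^br(w)` is continuous. For a family of continuous functions with measurable
evaluations, the maximum over an interval is a supremum over a countable dense subset, so it is
measurable too. Both regularity conditions reduce to countably many conditions on such maxima and
minima: a maximizer over `[a, b]` is unique iff no rationals `p < q` have the maximum attained both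
in `[a, p]` and in `[q, b]`, and a strict local minimum at level `0` is the unique minimizer of a
rational window on which the minimum is `0`.
-/

theorem existsUnique_mem_iff_forall_rat {A : Set ℝ} {a b : ℝ} (hA : A ⊆ Icc a b)
    (hne : A.Nonempty) :
    (∃! x, x ∈ A) ↔ ∀ p q : ℚ, a ≤ (p : ℝ) → (p : ℝ) < q → (q : ℝ) ≤ b →
      ¬((∃ x ∈ A, x ≤ p) ∧ ∃ y ∈ A, (q : ℝ) ≤ y) := by
  constructor
  · rintro ⟨z, -, hz⟩ p q - hpq - ⟨⟨x, hx, hxp⟩, y, hy, hqy⟩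
    exact (show x < y by linarith).ne ((hz x hx).trans (hz y hy).symm)
  · intro h
    have hsep : ∀ x ∈ A, ∀ y ∈ A, ¬x < y := by
      intro x hx y hy hxy
      obtain ⟨p, hxp, hpy⟩ := exists_rat_btwn hxy
      obtain ⟨q, hpq, hqy⟩ := exists_rat_btwn hpy
      exact h p q ((hA hx).1.trans hxp.le) hpq (hqy.le.trans (hA hy).2)
        ⟨⟨x, hx, hxp.le⟩, y, hy, hqy.le⟩
    obtain ⟨x, hx⟩ := hne
    exact ⟨x, hx, fun y hy => le_antisymm (not_lt.1 (hsep x hx y hy)) (not_lt.1 (hsep y hy x hx))⟩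

section MaxMin

variable {g : ℝ → ℝ} {a b c d : ℝ}

theorem le_maxOnIcc (hg : ContinuousOn g (Icc a b)) {u : ℝ} (hu : u ∈ Icc a b) :
    g u ≤ maxOnIcc g a b :=
  le_csSup (isCompact_Icc.bddAbove_image hg) (mem_image_of_mem g hu)

theorem maxOnIcc_le (hab : a ≤ b) (h : ∀ u ∈ Icc a b, g u ≤ c) : maxOnIcc g a b ≤ c :=
  csSup_le ((nonempty_Icc.2 hab).image g) (forall_mem_image.2 h)

theorem minOnIcc_le (hg : ContinuousOn g (Icc a b)) {u : ℝ} (hu : u ∈ Icc a b) :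
    minOnIcc g a b ≤ g u :=
  csInf_le (isCompact_Icc.bddBelow_image hg) (mem_image_of_mem g hu)

theorem le_minOnIcc (hab : a ≤ b) (h : ∀ u ∈ Icc a b, c ≤ g u) : c ≤ minOnIcc g a b :=
  le_csInf ((nonempty_Icc.2 hab).image g) (forall_mem_image.2 h)

theorem maxOnIcc_eq_of_isMaxOn_s11 (hg : ContinuousOn g (Icc a b)) {x : ℝ} (hx : x ∈ Icc a b)
    (hmax : ∀ u ∈ Icc a b, g u ≤ g x) : maxOnIcc g a b = g x :=
  le_antisymm (maxOnIcc_le (hx.1.trans hx.2) hmax) (le_maxOnIcc hg hx)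

theorem minOnIcc_eq_of_isMinOn (hg : ContinuousOn g (Icc a b)) {x : ℝ} (hx : x ∈ Icc a b)
    (hmin : ∀ u ∈ Icc a b, g x ≤ g u) : minOnIcc g a b = g x :=
  le_antisymm (minOnIcc_le hg hx) (le_minOnIcc (hx.1.trans hx.2) hmin)

theorem maxOnIcc_eq_maxOnIcc_iff (hg : ContinuousOn g (Icc a b)) (hac : a ≤ c) (hcd : c ≤ d)
    (hdb : d ≤ b) :
    maxOnIcc g c d = maxOnIcc g a b ↔ ∃ x ∈ Icc c d, ∀ u ∈ Icc a b, g u ≤ g x := by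
  have hsub : Icc c d ⊆ Icc a b := Icc_subset_Icc hac hdb
  constructor
  · intro h
    obtain ⟨x, hx, hxmax⟩ := isCompact_Icc.exists_isMaxOn (nonempty_Icc.2 hcd) (hg.mono hsub)
    refine ⟨x, hx, fun u hu => ?_⟩
    rw [← maxOnIcc_eq_of_isMaxOn_s11 (hg.mono hsub) hx hxmax, h]
    exact le_maxOnIcc hg hu
  · rintro ⟨x, hx, hxmax⟩
    rw [maxOnIcc_eq_of_isMaxOn_s11 hg (hsub hx) hxmax]
    exact maxOnIcc_eq_of_isMaxOn_s11 (hg.mono hsub) hx fun u hu => hxmax u (hsub hu)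

theorem existsUnique_isMaxOn_Icc_iff (hg : ContinuousOn g (Icc a b)) (hab : a ≤ b) :
    (∃! s, s ∈ Icc a b ∧ ∀ u ∈ Icc a b, g u ≤ g s) ↔
      ∀ p q : ℚ, a ≤ (p : ℝ) → (p : ℝ) < q → (q : ℝ) ≤ b →
        ¬(maxOnIcc g a p = maxOnIcc g a b ∧ maxOnIcc g q b = maxOnIcc g a b) := by
  refine (existsUnique_mem_iff_forall_rat (A := {s | s ∈ Icc a b ∧ ∀ u ∈ Icc a b, g u ≤ g s})
    (fun s hs => hs.1) (isCompact_Icc.exists_isMaxOn (nonempty_Icc.2 hab) hg)).trans ?_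
  refine forall₂_congr fun p q => forall₃_congr fun hap hpq hqb => ?_
  rw [maxOnIcc_eq_maxOnIcc_iff hg le_rfl hap (hpq.le.trans hqb),
    maxOnIcc_eq_maxOnIcc_iff hg (hap.trans hpq.le) hqb le_rfl]
  simp only [mem_ofPred_eq, mem_Icc]
  grind

end MaxMin

theorem exists_rat_mem_Icc_sub_lt {t δ : ℝ} (ht : 0 ≤ t) (hδ : 0 < δ) :
    ∃ p : ℚ, (p : ℝ) ∈ Icc 0 t ∧ t - δ < p ∧ ((p : ℝ) = 0 ∨ (p : ℝ) < t) := by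
  by_cases h : t - δ < 0
  · exact ⟨0, by simpa using ht, by simpa using h, by simp⟩
  · obtain ⟨p, htp, hpt⟩ := exists_rat_btwn (sub_lt_self t hδ)
    exact ⟨p, ⟨by linarith, hpt.le⟩, htp, Or.inr hpt⟩

theorem exists_rat_mem_Icc_lt_add {t δ : ℝ} (ht : t ≤ 1) (hδ : 0 < δ) :
    ∃ q : ℚ, (q : ℝ) ∈ Icc t 1 ∧ (q : ℝ) < t + δ ∧ ((q : ℝ) = 1 ∨ t < q) := by
  obtain ⟨p, hp, htp, hpt⟩ := exists_rat_mem_Icc_sub_lt (sub_nonneg.2 ht) hδ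
  refine ⟨1 - p, ?_, ?_, ?_⟩ <;> push_cast
  · exact ⟨by linarith [hp.2], by linarith [hp.1]⟩
  · linarith
  · exact hpt.imp (fun h => by linarith) fun h => by linarith

theorem exists_strictLocalMin_zero_iff {g : ℝ → ℝ} (hg : ContinuousOn g (Icc 0 1)) :
    (∃ t ∈ Icc (0 : ℝ) 1, g t = 0 ∧
        ∃ δ > 0, ∀ s ∈ Icc (0 : ℝ) 1, s ≠ t → |s - t| < δ → g t < g s) ↔
      ∃ p q : ℚ, 0 ≤ (p : ℝ) ∧ (p : ℝ) < q ∧ (q : ℝ) ≤ 1 ∧ minOnIcc g p q = 0 ∧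
        (∃! s, s ∈ Icc (p : ℝ) q ∧ ∀ u ∈ Icc (p : ℝ) q, g s ≤ g u) ∧
        ((p : ℝ) = 0 ∨ 0 < g p) ∧ ((q : ℝ) = 1 ∨ 0 < g q) := by
  constructor
  · rintro ⟨t, ht, hgt, δ, hδ, hlt⟩
    obtain ⟨p, hp, htp, hpt⟩ := exists_rat_mem_Icc_sub_lt ht.1 hδ
    obtain ⟨q, hq, hqδ, hqt⟩ := exists_rat_mem_Icc_lt_add ht.2 hδ
    have hpos : ∀ s ∈ Icc (p : ℝ) q, s ≠ t → g t < g s := fun s hs hst =>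
      hlt s ⟨hp.1.trans hs.1, hs.2.trans hq.2⟩ hst
        (abs_sub_lt_iff.2 ⟨by linarith [hs.2], by linarith [hs.1]⟩)
    have htm : t ∈ Icc (p : ℝ) q := ⟨hp.2, hq.1⟩
    have hpq : (p : ℝ) < q := by
      rcases hpt with hpt | hpt <;> rcases hqt with hqt | hqt <;> linarith [hp.2, hq.1]
    have htmin : ∀ u ∈ Icc (p : ℝ) q, g t ≤ g u := fun u hu =>
      (eq_or_ne u t).elim (fun h => h ▸ le_rfl) fun h => (hpos u hu h).le
    refine ⟨p, q, hp.1, hpq, hq.2, ?_, ⟨t, ⟨htm, htmin⟩, ?_⟩, ?_, ?_⟩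
    · rw [minOnIcc_eq_of_isMinOn (hg.mono (Icc_subset_Icc hp.1 hq.2)) htm htmin, hgt]
    · exact fun s hs => by_contra fun hst => (hs.2 t htm).not_gt (hpos s hs.1 hst)
    · exact hpt.imp_right fun h => hgt ▸ hpos p ⟨le_rfl, hpq.le⟩ h.ne
    · exact hqt.imp_right fun h => hgt ▸ hpos q ⟨hpq.le, le_rfl⟩ h.ne'
  · rintro ⟨p, q, hp0, hpq, hq1, hmin0, ⟨t, ⟨htm, htmin⟩, huniq⟩, hpg, hqg⟩
    have hsub : Icc (p : ℝ) q ⊆ Icc 0 1 := Icc_subset_Icc hp0 hq1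
    have hgt : g t = 0 := by rw [← hmin0, minOnIcc_eq_of_isMinOn (hg.mono hsub) htm htmin]
    have hleft : ∀ᶠ s in 𝓝 t, s ∈ Icc (0 : ℝ) 1 → (p : ℝ) ≤ s := by
      rcases hpg with hp | hp
      · exact Eventually.of_forall fun s hs => hp ▸ hs.1
      · have hpt : (p : ℝ) < t := htm.1.lt_of_ne (by rintro rfl; linarith)
        filter_upwards [Ioi_mem_nhds hpt] with s hs _ using hs.le
    have hright : ∀ᶠ s in 𝓝 t, s ∈ Icc (0 : ℝ) 1 → s ≤ q := by
      rcases hqg with hq | hq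
      · exact Eventually.of_forall fun s hs => hq ▸ hs.2
      · have htq : t < q := htm.2.lt_of_ne (by rintro rfl; linarith)
        filter_upwards [Iio_mem_nhds htq] with s hs _ using hs.le
    obtain ⟨δ, hδ, hball⟩ := Metric.eventually_nhds_iff.1 (hleft.and hright)
    refine ⟨t, hsub htm, hgt, δ, hδ, fun s hs hst hd => ?_⟩
    have hs' : s ∈ Icc (p : ℝ) q := by
      have := hball (by rwa [Real.dist_eq] : dist s t < δ)
      exact ⟨this.1 hs, this.2 hs⟩
    refine (htmin s hs').lt_of_ne fun h => hst (huniq s ⟨hs', fun u hu => ?_⟩)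
    rw [← h]; exact htmin u hu

section GammaHalf

variable {f : ℝ → ℝ} {a : ℝ}

theorem isLeast_gammaHalf (ha : 0 ≤ a) (hf : ContinuousOn f (Icc 0 a)) (h0 : f 0 = 0)
    (hfa : 0 ≤ f a) : IsLeast {s | s ∈ Icc 0 a ∧ f s = f a / 2} (gammaHalf a f) := by
  have hclosed : IsClosed {s | s ∈ Icc 0 a ∧ f s = f a / 2} :=
    hf.preimage_isClosed_of_isClosed isClosed_Icc isClosed_singleton
  obtain ⟨s, hs, hfs⟩ := intermediate_value_Icc ha hf (show f a / 2 ∈ Icc (f 0) (f a) by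
    rw [h0]; constructor <;> linarith)
  exact ⟨hclosed.csInf_mem ⟨s, hs, hfs⟩ ⟨0, fun s hs => hs.1.1⟩,
    fun s hs => csInf_le ⟨0, fun s hs => hs.1.1⟩ hs⟩

theorem gammaHalf_le_iff (ha : 0 ≤ a) (hf : ContinuousOn f (Icc 0 a)) (h0 : f 0 = 0)
    (hfa : 0 ≤ f a) {c : ℝ} :
    gammaHalf a f ≤ c ↔ 0 ≤ c ∧ f a / 2 ≤ maxOnIcc f 0 (min c a) := by
  have hγ := isLeast_gammaHalf ha hf h0 hfa
  have hfc : ContinuousOn f (Icc 0 (min c a)) := hf.mono (Icc_subset_Icc le_rfl (min_le_right c a))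
  constructor
  · intro hc
    have hmem : gammaHalf a f ∈ Icc 0 (min c a) := ⟨hγ.1.1.1, le_min hc hγ.1.1.2⟩
    exact ⟨hγ.1.1.1.trans hc, hγ.1.2 ▸ le_maxOnIcc hfc hmem⟩
  · rintro ⟨hc, hle⟩
    obtain ⟨x, hx, hxmax⟩ := isCompact_Icc.exists_isMaxOn (nonempty_Icc.2 (le_min hc ha)) hfc
    rw [maxOnIcc_eq_of_isMaxOn_s11 hfc hx hxmax] at hle
    obtain ⟨s, hs, hfs⟩ := intermediate_value_Icc hx.1 (hfc.mono (Icc_subset_Icc le_rfl hx.2))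
      (show f a / 2 ∈ Icc (f 0) (f x) by rw [h0]; constructor <;> linarith)
    have hsx : s ≤ min c a := hs.2.trans hx.2
    exact (hγ.2 ⟨⟨hs.1, hsx.trans (min_le_right c a)⟩, hfs⟩).trans (hsx.trans (min_le_left c a))

theorem continuous_Tbr (ha : 0 ≤ a) (hf : Continuous f) (h0 : f 0 = 0) (hfa : 0 ≤ f a) :
    Continuous (Tbr a f) := by
  have hγ := (isLeast_gammaHalf ha hf.continuousOn h0 hfa).1.2
  refine Continuous.if_le hf ((hf.comp (continuous_const.sub continuous_id)).sub continuous_const)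
    continuous_id continuous_const fun t ht => ?_
  simp only [ht, add_sub_cancel_right, hγ]
  ring

end GammaHalf

section Measurability

variable {α : Type*} [MeasurableSpace α] {F : α → ℝ → ℝ} {a b : ℝ}

theorem measurable_const_imp {P : Prop} {q : α → Prop} (h : P → Measurable q) :
    Measurable fun w => P → q w := by
  by_cases hP : P
  · simpa only [hP, true_imp_iff] using h hP
  · simpa only [hP, false_imp_iff] using measurable_const

theorem measurable_maxOnIcc (hc : ∀ w, ContinuousOn (F w) (Icc a b))
    (hm : ∀ r ∈ Icc a b, Measurable fun w => F w r) :
    Measurable fun w => maxOnIcc (F w) a b := by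
  obtain ⟨S, hSc, hSd⟩ := TopologicalSpace.exists_countable_dense (Icc a b)
  have := hSc.to_subtype
  have h : ∀ w, maxOnIcc (F w) a b = ⨆ s : S, F w s := fun w => by
    rw [maxOnIcc, sSup_image']
    exact (hSd.ciSup' (hc w).domRestrict).symm
  simp only [h]
  exact Measurable.iSup fun s => hm s s.1.2

theorem measurable_minOnIcc (hc : ∀ w, ContinuousOn (F w) (Icc a b))
    (hm : ∀ r ∈ Icc a b, Measurable fun w => F w r) :
    Measurable fun w => minOnIcc (F w) a b := by
  obtain ⟨S, hSc, hSd⟩ := TopologicalSpace.exists_countable_dense (Icc a b)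
  have := hSc.to_subtype
  have h : ∀ w, minOnIcc (F w) a b = ⨅ s : S, F w s := fun w => by
    rw [minOnIcc, sInf_image']
    exact (hSd.ciInf' (hc w).domRestrict).symm
  simp only [h]
  exact Measurable.iInf fun s => hm s s.1.2

theorem measurable_existsUnique_isMaxOn (hc : ∀ w, ContinuousOn (F w) (Icc a b))
    (hm : ∀ r ∈ Icc a b, Measurable fun w => F w r) :
    Measurable fun w => ∃! s, s ∈ Icc a b ∧ ∀ u ∈ Icc a b, F w u ≤ F w s := by
  rcases lt_or_ge b a with hba | hab
  · simp only [Icc_eq_empty_of_lt hba, mem_empty_iff_false, false_and, existsUnique_false]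
    exact measurable_const
  simp only [existsUnique_isMaxOn_Icc_iff (hc _) hab]
  refine Measurable.forall fun p => Measurable.forall fun q => measurable_const_imp fun hap =>
    measurable_const_imp fun hpq => measurable_const_imp fun hqb => Measurable.not ?_
  have hsub : ∀ {c d}, a ≤ c → d ≤ b → Measurable fun w => maxOnIcc (F w) c d :=
    fun hac hdb => measurable_maxOnIcc (fun w => (hc w).mono (Icc_subset_Icc hac hdb))
      fun r hr => hm r ⟨hac.trans hr.1, hr.2.trans hdb⟩
  have hab' := hsub le_rfl le_rfl
  exact (measurableSet_eq_fun (hsub le_rfl (hpq.le.trans hqb)) hab').mem.and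
    (measurableSet_eq_fun (hsub (hap.trans hpq.le) le_rfl) hab').mem

theorem measurable_existsUnique_isMinOn (hc : ∀ w, ContinuousOn (F w) (Icc a b))
    (hm : ∀ r ∈ Icc a b, Measurable fun w => F w r) :
    Measurable fun w => ∃! s, s ∈ Icc a b ∧ ∀ u ∈ Icc a b, F w s ≤ F w u := by
  simpa only [neg_le_neg_iff] using measurable_existsUnique_isMaxOn (F := fun w r => -F w r)
    (fun w => (hc w).neg) fun r hr => (hm r hr).neg

theorem measurable_gammaHalf (ha : 0 ≤ a) (hc : ∀ w, ContinuousOn (F w) (Icc 0 a))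
    (hm : ∀ r ∈ Icc 0 a, Measurable fun w => F w r) (h0 : ∀ w, F w 0 = 0)
    (hfa : ∀ w, 0 ≤ F w a) : Measurable fun w => gammaHalf a (F w) := by
  refine measurable_of_Iic fun c => ?_
  have hsub : Icc 0 (min c a) ⊆ Icc 0 a := Icc_subset_Icc le_rfl (min_le_right c a)
  have hmax : Measurable fun w => maxOnIcc (F w) 0 (min c a) :=
    measurable_maxOnIcc (fun w => (hc w).mono hsub) fun r hr => hm r (hsub hr)
  have hset : (fun w => gammaHalf a (F w)) ⁻¹' Iic c =
      {w | 0 ≤ c ∧ F w a / 2 ≤ maxOnIcc (F w) 0 (min c a)} :=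
    ext fun w => gammaHalf_le_iff ha (hc w) (h0 w) (hfa w)
  rw [hset]
  exact (measurable_const.and (measurableSet_le ((hm a ⟨ha, le_rfl⟩).div_const 2) hmax).mem).setOf

theorem measurable_Tbr_apply (ha : 0 ≤ a) (hc : ∀ w, Continuous (F w))
    (hm : ∀ r, Measurable fun w => F w r) (h0 : ∀ w, F w 0 = 0) (hfa : ∀ w, 0 ≤ F w a) (r : ℝ) :
    Measurable fun w => Tbr a (F w) r := by
  have hF : Measurable fun p : ℝ × α => F p.2 p.1 :=
    measurable_uncurry_of_continuous_of_measurable (u := fun s w => F w s) hc hm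
  have hγ : Measurable fun w => gammaHalf a (F w) :=
    measurable_gammaHalf ha (fun w => (hc w).continuousOn) (fun r _ => hm r) h0 hfa
  exact Measurable.ite (measurableSet_le measurable_const hγ) (hm r)
    ((hF.comp (((measurable_const.add hγ).sub measurable_const).prodMk measurable_id)).sub
      (hF.comp (hγ.prodMk measurable_id)))

theorem measurableSet_setOf_regular (hc : ∀ w, Continuous (F w))
    (hm : ∀ r, Measurable fun w => F w r) : MeasurableSet {w | Regular (F w)} := by
  simp only [Regular, IsBridge, UniqueOneSidedMax, NoStrictLocalMinAtZero,
    exists_strictLocalMin_zero_iff (hc _).continuousOn, (hc _).continuousOn, true_and]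
  have hmax {c d : ℝ} : Measurable fun w => ∃! s, s ∈ Icc c d ∧ ∀ u ∈ Icc c d, F w u ≤ F w s :=
    measurable_existsUnique_isMaxOn (fun w => (hc w).continuousOn) fun r _ => hm r
  have hmin {c d : ℝ} : Measurable fun w => ∃! s, s ∈ Icc c d ∧ ∀ u ∈ Icc c d, F w s ≤ F w u :=
    measurable_existsUnique_isMinOn (fun w => (hc w).continuousOn) fun r _ => hm r
  have hpos (r : ℝ) : Measurable fun w => 0 < F w r :=
    (measurableSet_lt measurable_const (hm r)).mem
  refine Measurable.setOf ((((hm 0).eq_const 0).and ((hm 1).eq_const 0)).and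
    ((Measurable.forall fun t => measurable_const.imp (hmax.and hmax)).and
      (Measurable.not (Measurable.exists fun p => Measurable.exists fun q => ?_))))
  have hminOn : Measurable fun w => minOnIcc (F w) p q :=
    measurable_minOnIcc (fun w => (hc w).continuousOn) fun r _ => hm r
  exact measurable_const.and (measurable_const.and (measurable_const.and ((hminOn.eq_const 0).and
    (hmin.and ((measurable_const.or (hpos p)).and (measurable_const.or (hpos q)))))))

end Measurability

theorem IsMeander.nonneg_apply_self {f : ℝ → ℝ} {a : ℝ} (hf : IsMeander a f) (ha : 0 ≤ a) :
    0 ≤ f a :=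
  hf.2.1 ▸ hf.2.2 0 ⟨le_rfl, ha⟩

theorem measurableSet_setOf_regular_Tbr {α : Type*} [MeasurableSpace α] {F : α → ℝ → ℝ}
    (hc : ∀ w, Continuous (F w)) (hm : ∀ r, Measurable fun w => F w r)
    (hF : ∀ w, IsMeander 1 (F w)) : MeasurableSet {w | Regular (Tbr 1 (F w))} :=
  have h0 w := (hF w).2.1
  have h1 w := (hF w).nonneg_apply_self zero_le_one
  measurableSet_setOf_regular (fun w => continuous_Tbr zero_le_one (hc w) (h0 w) (h1 w))
    (measurable_Tbr_apply zero_le_one hc hm h0 h1)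

theorem isClosed_setOf_isMeander_IccExtend {a : ℝ} (ha : 0 ≤ a) :
    IsClosed {w : C(Icc 0 a, ℝ) | IsMeander a (IccExtend ha ⇑w)} := by
  have hev (s : ℝ) : Continuous fun w : C(Icc 0 a, ℝ) => IccExtend ha ⇑w s :=
    continuous_eval_const _
  have hcont (w : C(Icc 0 a, ℝ)) : ContinuousOn (IccExtend ha ⇑w) (Icc 0 a) :=
    w.continuous.Icc_extend'.continuousOn
  simp only [IsMeander, hcont, true_and, ofPred_and, ofPred_forall]
  exact (isClosed_eq (hev 0) continuous_const).inter
    (isClosed_iInter fun s => isClosed_iInter fun _ => isClosed_le (hev s) (hev a))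

/-- `M^reg_1` is a Borel subset of `C([0,1],ℝ)`. -/
theorem stmt11 :
    MeasurableSet[borel C(Set.Icc (0:ℝ) 1, ℝ)]
      {w : C(Set.Icc (0:ℝ) 1, ℝ) | IsMeander 1 (Set.IccExtend zero_le_one ⇑w) ∧
        Regular (Tbr 1 (Set.IccExtend zero_le_one ⇑w))} := by
  borelize C(Set.Icc (0:ℝ) 1, ℝ)
  set M := {w : C(Set.Icc (0:ℝ) 1, ℝ) | IsMeander 1 (Set.IccExtend zero_le_one ⇑w)}
  have hreg : MeasurableSet {w : M | Regular (Tbr 1 (IccExtend zero_le_one ⇑w.1))} :=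
    measurableSet_setOf_regular_Tbr (fun w => w.1.continuous.Icc_extend')
      (fun r => ((continuous_eval_const _).comp continuous_subtype_val).measurable) fun w => w.2
  convert (isClosed_setOf_isMeander_IccExtend zero_le_one).measurableSet.subtype_image hreg
  ext w
  exact ⟨fun ⟨hw, hreg⟩ => ⟨⟨w, hw⟩, hreg, rfl⟩, fun ⟨v, hreg, hv⟩ => hv ▸ ⟨v.2, hreg⟩⟩
end
end

section
/- For all x > 0 and λ > 0: ∫_0^∞ (1/(x√(2πs))) (1 − e^{−x²/(2s)}) e^{−λs} ds = (1 − e^{−x√(2λ)}) / (x√(2λ)). In particular, the Laplace transform of the function g_x at λ equals (1 − e^{−x√(2λ)})/(x√(2λ)). -/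
open Set Filter MeasureTheory Topology UniformConvergence

noncomputable section

/-- the density `g_x`. -/
def gx (x s : ℝ) : ℝ :=
  if 0 < s then (1 / (x * Real.sqrt (2 * Real.pi * s))) * (1 - Real.exp (-x ^ 2 / (2 * s)))
  else 0

/-!
Substituting `s = t²` turns the integral into a constant times
`∫₀^∞ (e^{-λt²} - e^{-(a/t² + λt²)}) dt` with `a = x²/2`. The first term is half a Gaussian
integral. For the second, write `a = α²`, `λ = β²`: the substitution `u = βt - α/t` maps `(0,∞)`
onto `ℝ` and gives `√π = e^{2αβ} ∫₀^∞ (β + α/t²) e^{-(α²/t² + β²t²)} dt`, while the involution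
`t ↦ α/(βt)` shows that the two summands contribute equally. Hence
`∫₀^∞ e^{-(a/t² + λt²)} dt = √(π/λ)/2 · e^{-2√(aλ)}`.
-/

open Real

theorem integral_Ioi_comp_sq (g : ℝ → ℝ) :
    ∫ t in Ioi (0:ℝ), 2 * t * g (t ^ 2) = ∫ s in Ioi (0:ℝ), g s := by
  simpa [rpow_two, show (2:ℝ) - 1 = 1 by norm_num] using
    integral_comp_rpow_Ioi_of_pos (g := g) two_pos

section CompDiv

variable (g : ℝ → ℝ) {c : ℝ}

theorem div_sq_mul_comp_div_eq_smul {t : ℝ} (ht : 0 < t) :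
    c / t ^ 2 * g (c / t) = c • (|(-1:ℝ)| * t ^ ((-1:ℝ) - 1)) • g (c * t ^ (-1:ℝ)) := by
  rw [show (-1:ℝ) - 1 = -(2:ℕ) by norm_num, rpow_neg ht.le, rpow_natCast, rpow_neg_one]
  simp only [smul_eq_mul, abs_neg, abs_one, one_mul]
  field_simp

theorem integral_Ioi_comp_div (hc : 0 < c) :
    ∫ t in Ioi (0:ℝ), c / t ^ 2 * g (c / t) = ∫ t in Ioi (0:ℝ), g t := by
  have h := integral_comp_rpow_Ioi (fun y => g (c * y)) (p := -1) (by norm_num)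
  rw [integral_comp_mul_left_Ioi g 0 hc, mul_zero] at h
  rw [setIntegral_congr_fun measurableSet_Ioi fun t ht => div_sq_mul_comp_div_eq_smul g ht,
    integral_smul, h, smul_inv_smul₀ hc.ne']

theorem integrableOn_Ioi_comp_div_iff (hc : 0 < c) :
    IntegrableOn (fun t => c / t ^ 2 * g (c / t)) (Ioi 0) ↔ IntegrableOn g (Ioi 0) := by
  have h := integrableOn_Ioi_comp_rpow_iff (fun y => g (c * y)) (p := -1) (by norm_num)
  rw [integrableOn_Ioi_comp_mul_left_iff g 0 hc, mul_zero] at h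
  exact (integrableOn_congr_fun (fun t ht => div_sq_mul_comp_div_eq_smul g ht)
    measurableSet_Ioi).trans ((integrable_smul_iff hc.ne' _).trans h)

end CompDiv

theorem integrable_exp_neg_div_sq_add_mul_sq {a b : ℝ} (ha : 0 ≤ a) (hb : 0 < b) :
    Integrable fun t : ℝ => exp (-(a / t ^ 2 + b * t ^ 2)) := by
  refine (integrable_exp_neg_mul_sq hb).mono' (by fun_prop) (ae_of_all _ fun t => ?_)
  rw [norm_of_nonneg (exp_pos _).le, exp_le_exp]
  nlinarith [div_nonneg ha (sq_nonneg t)]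

section MulSubDiv

variable {α β : ℝ} (hα : 0 < α) (hβ : 0 < β)
include hα hβ

theorem strictMonoOn_mul_sub_div : StrictMonoOn (fun t => β * t - α / t) (Ioi 0) :=
  fun s (hs : 0 < s) t _ hst => by
    have := div_lt_div_of_pos_left hα hs hst
    dsimp only
    nlinarith

theorem image_mul_sub_div_Ioi : (fun t => β * t - α / t) '' Ioi 0 = univ := by
  refine eq_univ_of_forall fun y => ?_
  -- the positive root of `β t² - y t - α = 0`
  set D := √(y ^ 2 + 4 * α * β)
  have hD2 : D ^ 2 = y ^ 2 + 4 * α * β := sq_sqrt (by positivity)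
  have hyD : 0 < y + D := by
    have : |y| < D := by
      rw [← sqrt_sq_eq_abs]
      exact sqrt_lt_sqrt (sq_nonneg y) (by nlinarith)
    linarith [neg_abs_le y]
  refine ⟨(y + D) / (2 * β), div_pos hyD (by positivity), ?_⟩
  field_simp
  nlinarith [hD2]

theorem integral_exp_neg_sq_div_sq_add_sq_mul_sq :
    ∫ t in Ioi (0:ℝ), exp (-(α ^ 2 / t ^ 2 + β ^ 2 * t ^ 2))
      = √π / (2 * β) * exp (-(2 * α * β)) := by
  set G : ℝ → ℝ := fun t => exp (-(α ^ 2 / t ^ 2 + β ^ 2 * t ^ 2))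
  set c := α / β
  have hc : 0 < c := div_pos hα hβ
  have hG_symm : ∀ t ∈ Ioi (0:ℝ), c / t ^ 2 * G (c / t) = c / t ^ 2 * G t := by
    intro t (ht : 0 < t)
    simp only [G, c]
    congr 3
    field_simp
    ring
  have hG_int : IntegrableOn G (Ioi 0) :=
    (integrable_exp_neg_div_sq_add_mul_sq (sq_nonneg α) (by positivity)).integrableOn
  have hG_int' : IntegrableOn (fun t => c / t ^ 2 * G t) (Ioi 0) :=
    ((integrableOn_Ioi_comp_div_iff G hc).2 hG_int).congr_fun hG_symm measurableSet_Ioi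
  have hG_inv : ∫ t in Ioi (0:ℝ), c / t ^ 2 * G t = ∫ t in Ioi (0:ℝ), G t := by
    rw [← setIntegral_congr_fun measurableSet_Ioi hG_symm, integral_Ioi_comp_div G hc]
  have hgauss : √π = ∫ t in Ioi (0:ℝ), |β + α / t ^ 2| • exp (-(β * t - α / t) ^ 2) := by
    have h := integral_image_eq_integral_abs_deriv_smul (f := fun t => β * t - α / t)
      (f' := fun t => β + α / t ^ 2) measurableSet_Ioi
      (fun t (ht : 0 < t) => ((((hasDerivAt_id t).const_mul β).sub
        ((hasDerivAt_const t α).div (hasDerivAt_id t) ht.ne')).hasDerivWithinAt).congr_deriv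
        (by simp only [id]; field_simp; ring))
      (strictMonoOn_mul_sub_div hα hβ).injOn fun u => exp (-u ^ 2)
    rw [image_mul_sub_div_Ioi hα hβ, setIntegral_univ] at h
    rw [← h]
    simpa using (integral_gaussian 1).symm
  have hexpand : ∀ t ∈ Ioi (0:ℝ), |β + α / t ^ 2| • exp (-(β * t - α / t) ^ 2)
      = exp (2 * α * β) * β * (G t + c / t ^ 2 * G t) := by
    intro t (ht : 0 < t)
    rw [abs_of_pos (by positivity), smul_eq_mul, show -(β * t - α / t) ^ 2
      = 2 * α * β + -(α ^ 2 / t ^ 2 + β ^ 2 * t ^ 2) by field_simp; ring, exp_add]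
    simp only [G, c]
    field_simp
  rw [setIntegral_congr_fun measurableSet_Ioi hexpand, integral_const_mul,
    integral_add hG_int hG_int', hG_inv] at hgauss
  rw [exp_neg, hgauss]
  field_simp
  ring

end MulSubDiv

theorem integral_exp_neg_div_sq_add_mul_sq {a b : ℝ} (ha : 0 ≤ a) (hb : 0 < b) :
    ∫ t in Ioi (0:ℝ), exp (-(a / t ^ 2 + b * t ^ 2)) = √(π / b) / 2 * exp (-(2 * √(a * b))) := by
  rcases ha.eq_or_lt with rfl | ha
  · simpa using integral_gaussian_Ioi b
  have h := integral_exp_neg_sq_div_sq_add_sq_mul_sq (sqrt_pos.2 ha) (sqrt_pos.2 hb)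
  rw [sq_sqrt ha.le, sq_sqrt hb.le] at h
  rw [h, sqrt_div' _ hb.le, sqrt_mul ha.le, mul_assoc]
  field_simp

theorem integral_Ioi_one_sub_exp_neg_div_div_sqrt_mul_exp_neg_mul {a b : ℝ} (ha : 0 ≤ a)
    (hb : 0 < b) :
    ∫ s in Ioi (0:ℝ), (1 - exp (-a / s)) / √s * exp (-(b * s))
      = √(π / b) * (1 - exp (-(2 * √(a * b)))) := by
  rw [← integral_Ioi_comp_sq]
  have h_sq : ∀ t ∈ Ioi (0:ℝ), 2 * t * ((1 - exp (-a / t ^ 2)) / √(t ^ 2) * exp (-(b * t ^ 2)))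
      = 2 * (exp (-(0 / t ^ 2 + b * t ^ 2)) - exp (-(a / t ^ 2 + b * t ^ 2))) := by
    intro t (ht : 0 < t)
    rw [sqrt_sq ht.le, neg_div, zero_div, zero_add, neg_add, exp_add]
    field_simp
  rw [setIntegral_congr_fun measurableSet_Ioi h_sq, integral_const_mul,
    integral_sub (integrable_exp_neg_div_sq_add_mul_sq le_rfl hb).integrableOn
      (integrable_exp_neg_div_sq_add_mul_sq ha hb).integrableOn,
    integral_exp_neg_div_sq_add_mul_sq le_rfl hb, integral_exp_neg_div_sq_add_mul_sq ha hb]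
  rw [zero_mul, sqrt_zero, mul_zero, neg_zero, exp_zero, mul_one]
  ring

/-- the Laplace transform of `g_x`. -/
theorem stmt18 (x : ℝ) (hx : 0 < x) (l : ℝ) (hl : 0 < l) :
    (∫ s in Set.Ioi (0:ℝ),
        (1 / (x * Real.sqrt (2 * Real.pi * s))) * (1 - Real.exp (-x ^ 2 / (2 * s))) *
          Real.exp (-(l * s)))
      = (1 - Real.exp (-(x * Real.sqrt (2 * l)))) / (x * Real.sqrt (2 * l)) ∧
    (∫ s in Set.Ioi (0:ℝ), gx x s * Real.exp (-(l * s)))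
      = (1 - Real.exp (-(x * Real.sqrt (2 * l)))) / (x * Real.sqrt (2 * l)) := by
  have h_integrand : ∀ s ∈ Ioi (0:ℝ),
      1 / (x * √(2 * π * s)) * (1 - exp (-x ^ 2 / (2 * s))) * exp (-(l * s))
        = (x * √(2 * π))⁻¹ * ((1 - exp (-(x ^ 2 / 2) / s)) / √s * exp (-(l * s))) := by
    intro s (hs : 0 < s)
    rw [sqrt_mul (by positivity), neg_div, neg_div, div_div]
    field_simp
  have h_exponent : 2 * √(x ^ 2 / 2 * l) = x * √(2 * l) := by
    rw [show x ^ 2 / 2 * l = (x / 2) ^ 2 * (2 * l) by ring, sqrt_mul (sq_nonneg _),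
      sqrt_sq (by positivity)]
    ring
  have h_const : √(π / l) * √(2 * l) = √(2 * π) := by
    rw [← sqrt_mul (by positivity)]
    congr 1
    field_simp
  have h_first : ∫ s in Ioi (0:ℝ),
      1 / (x * √(2 * π * s)) * (1 - exp (-x ^ 2 / (2 * s))) * exp (-(l * s))
        = (1 - exp (-(x * √(2 * l)))) / (x * √(2 * l)) := by
    rw [setIntegral_congr_fun measurableSet_Ioi h_integrand, integral_const_mul,
      integral_Ioi_one_sub_exp_neg_div_div_sqrt_mul_exp_neg_mul (by positivity) hl,
      h_exponent, ← h_const]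
    field_simp
  refine ⟨h_first, h_first ▸ setIntegral_congr_fun measurableSet_Ioi fun s (hs : 0 < s) => ?_⟩
  simp only [gx, if_pos hs]
end
end

section
/- For every x > 0, the function g_x is a probability density on (0,∞): g_x(s) ≥ 0 for all s > 0 and ∫_0^∞ g_x(s) ds = 1. -/
open Set Filter MeasureTheory Topology UniformConvergence

noncomputable section

/-!
For `s > 0`, `g_x` has the explicit primitive `s ↦ K (x / √(2s))`, where `K = gxProfile`,
`K v = erfc v + (1 - e^{-v²}) / (√π v)`, satisfies `K' v = -(1 - e^{-v²}) / (√π v²)`.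
As `s` runs from `0` to `∞`, `x / √(2s)` runs from `∞` down to `0`, so the primitive increases
from `K ∞ = 0` to `K 0⁺ = 1`.
-/

open Real

theorem integral_Ioi_of_hasDerivAt_of_nonneg_of_tendsto_nhdsGT {f f' : ℝ → ℝ} {a l₀ l : ℝ}
    (hderiv : ∀ x ∈ Ioi a, HasDerivAt f (f' x) x) (hf' : ∀ x ∈ Ioi a, 0 ≤ f' x)
    (ha : Tendsto f (𝓝[>] a) (𝓝 l₀)) (htop : Tendsto f atTop (𝓝 l)) :
    ∫ x in Ioi a, f' x = l - l₀ := by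
  have hcont : ContinuousWithinAt (Function.update f a l₀) (Ici a) a := by
    rwa [continuousWithinAt_update_same, Ici_sdiff_left]
  have hderiv' : ∀ x ∈ Ioi a, HasDerivAt (Function.update f a l₀) (f' x) x := fun x hx =>
    (hderiv x hx).congr_of_eventuallyEq <| by
      filter_upwards [Ioi_mem_nhds hx] with y hy using Function.update_of_ne hy.ne' _ _
  have htop' : Tendsto (Function.update f a l₀) atTop (𝓝 l) :=
    htop.congr' <| by
      filter_upwards [eventually_gt_atTop a] with y hy using (Function.update_of_ne hy.ne' _ _).symm
  simpa using integral_Ioi_of_hasDerivAt_of_nonneg hcont hderiv' hf' htop'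

lemma one_sub_exp_neg_nonneg {t : ℝ} (ht : 0 ≤ t) : 0 ≤ 1 - exp (-t) := by
  simpa using exp_le_one_iff.2 (neg_nonpos.2 ht)

lemma gx_nonneg {x : ℝ} (hx : 0 ≤ x) (s : ℝ) : 0 ≤ gx x s := by
  unfold gx
  split_ifs with hs
  · rw [neg_div]
    exact mul_nonneg (by positivity) (one_sub_exp_neg_nonneg (by positivity))
  · rfl

def gaussPartial (y : ℝ) : ℝ := ∫ t in (0:ℝ)..y, exp (-t ^ 2)

lemma hasDerivAt_gaussPartial (y : ℝ) : HasDerivAt gaussPartial (exp (-y ^ 2)) y :=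
  ((by fun_prop : Continuous fun t : ℝ => exp (-t ^ 2)).integral_hasStrictDerivAt 0 y).hasDerivAt

lemma tendsto_gaussPartial_atTop : Tendsto gaussPartial atTop (𝓝 (√π / 2)) := by
  have hint : IntegrableOn (fun t : ℝ => exp (-t ^ 2)) (Ioi 0) := by
    simpa using (integrable_exp_neg_mul_sq one_pos).integrableOn
  have hval : ∫ t in Ioi (0:ℝ), exp (-t ^ 2) = √π / 2 := by
    simpa using integral_gaussian_Ioi 1
  rw [← hval]
  exact intervalIntegral_tendsto_integral_Ioi 0 hint tendsto_id

def gxProfile (v : ℝ) : ℝ := (1 - exp (-v ^ 2)) / (√π * v) + 1 - 2 / √π * gaussPartial v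

lemma hasDerivAt_gxProfile {v : ℝ} (hv : v ≠ 0) :
    HasDerivAt gxProfile (-((1 - exp (-v ^ 2)) / (√π * v ^ 2))) v := by
  have hπ : √π ≠ 0 := (sqrt_pos.2 pi_pos).ne'
  have hnum : HasDerivAt (fun v => 1 - exp (-v ^ 2)) (2 * v * exp (-v ^ 2)) v := by
    simpa [mul_comm] using ((hasDerivAt_pow 2 v).neg.exp).const_sub 1
  have hden : HasDerivAt (fun v => √π * v) √π v := by
    simpa using (hasDerivAt_id v).const_mul √π
  have h := ((hnum.div hden (mul_ne_zero hπ hv)).add_const 1).sub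
    ((hasDerivAt_gaussPartial v).const_mul (2 / √π))
  refine h.congr_deriv ?_
  field_simp
  ring

lemma tendsto_gxProfile_atTop : Tendsto gxProfile atTop (𝓝 0) := by
  have hfrac : Tendsto (fun v => (1 - exp (-v ^ 2)) / (√π * v)) atTop (𝓝 0) := by
    refine squeeze_zero' ?_ ?_ ((tendsto_inv_atTop_zero.comp
      (tendsto_id.const_mul_atTop (sqrt_pos.2 pi_pos))))
    · filter_upwards [eventually_ge_atTop 0] with v hv
      exact div_nonneg (one_sub_exp_neg_nonneg (sq_nonneg v)) (by positivity)
    · filter_upwards [eventually_gt_atTop 0] with v hv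
      rw [div_eq_mul_inv]
      exact mul_le_of_le_one_left (by positivity) (by linarith [exp_pos (-v ^ 2)])
  have h := (hfrac.add_const 1).sub (tendsto_gaussPartial_atTop.const_mul (2 / √π))
  have hπ : √π ≠ 0 := (sqrt_pos.2 pi_pos).ne'
  rwa [show (0:ℝ) + 1 - 2 / √π * (√π / 2) = 0 by field_simp; ring] at h

lemma tendsto_gxProfile_nhdsGT_zero : Tendsto gxProfile (𝓝[>] 0) (𝓝 1) := by
  have hfrac : Tendsto (fun v => (1 - exp (-v ^ 2)) / (√π * v)) (𝓝[>] 0) (𝓝 0) := by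
    have hlin : Tendsto (fun v : ℝ => v / √π) (𝓝[>] 0) (𝓝 0) := by
      simpa using ((tendsto_id (x := 𝓝 (0:ℝ))).div_const √π).mono_left nhdsWithin_le_nhds
    refine squeeze_zero' ?_ ?_ hlin
    · filter_upwards [self_mem_nhdsWithin] with v (hv : 0 < v)
      exact div_nonneg (one_sub_exp_neg_nonneg (sq_nonneg v)) (by positivity)
    · filter_upwards [self_mem_nhdsWithin] with v (hv : 0 < v)
      rw [div_le_div_iff₀ (by positivity) (by positivity)]
      nlinarith [one_sub_le_exp_neg (v ^ 2), sqrt_pos.2 pi_pos]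
  have hΦ : Tendsto gaussPartial (𝓝[>] 0) (𝓝 0) := by
    simpa [gaussPartial] using
      (hasDerivAt_gaussPartial 0).continuousAt.tendsto.mono_left nhdsWithin_le_nhds
  rw [show (1:ℝ) = 0 + 1 - 2 / √π * 0 by ring]
  exact (hfrac.add_const 1).sub (hΦ.const_mul (2 / √π))

lemma tendsto_div_sqrt_two_mul_nhdsGT_zero {x : ℝ} (hx : 0 < x) :
    Tendsto (fun s : ℝ => x / √(2 * s)) (𝓝[>] 0) atTop := by
  have h : Tendsto (fun s : ℝ => √(2 * s)) (𝓝[>] 0) (𝓝[>] 0) := by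
    refine tendsto_nhdsWithin_iff.2 ⟨?_, ?_⟩
    · simpa using ((by fun_prop : Continuous fun s : ℝ => √(2 * s)).tendsto 0).mono_left
        nhdsWithin_le_nhds
    · filter_upwards [self_mem_nhdsWithin] with s (hs : 0 < s)
      exact sqrt_pos.2 (by positivity)
  simpa only [div_eq_mul_inv, Function.comp_def] using
    (tendsto_inv_nhdsGT_zero.comp h).const_mul_atTop hx

lemma tendsto_div_sqrt_two_mul_atTop {x : ℝ} (hx : 0 < x) :
    Tendsto (fun s : ℝ => x / √(2 * s)) atTop (𝓝[>] 0) := by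
  refine tendsto_nhdsWithin_iff.2 ⟨?_, ?_⟩
  · exact tendsto_const_nhds.div_atTop
      (tendsto_sqrt_atTop.comp (tendsto_id.const_mul_atTop two_pos))
  · filter_upwards [eventually_gt_atTop 0] with s hs
    exact div_pos hx (sqrt_pos.2 (by positivity))

lemma hasDerivAt_gxProfile_div_sqrt {x s : ℝ} (hx : x ≠ 0) (hs : 0 < s) :
    HasDerivAt (fun s => gxProfile (x / √(2 * s))) (gx x s) s := by
  have hr : 0 < √(2 * s) := sqrt_pos.2 (by positivity)
  have hsqrt : HasDerivAt (fun s => √(2 * s)) (1 / √(2 * s)) s := by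
    refine (((hasDerivAt_id' s).const_mul 2).sqrt (by positivity)).congr_deriv ?_
    field_simp
  have hv := (hasDerivAt_gxProfile (div_ne_zero hx hr.ne')).comp s
    ((hasDerivAt_const s x).div hsqrt hr.ne')
  refine hv.congr_deriv ?_
  have hr2 : √(2 * s) ^ 2 = 2 * s := sq_sqrt (by positivity)
  rw [gx, if_pos hs, show 2 * π * s = π * (2 * s) by ring, sqrt_mul pi_pos.le, div_pow, hr2,
    neg_div]
  field_simp
  rw [hr2]
  ring

/-- `g_x` is a probability density on `(0,∞)`. -/
theorem stmt19 (x : ℝ) (hx : 0 < x) :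
    (∀ s : ℝ, 0 < s → 0 ≤ gx x s) ∧ (∫ s in Set.Ioi (0:ℝ), gx x s) = 1 := by
  refine ⟨fun s _ => gx_nonneg hx.le s, ?_⟩
  have h := integral_Ioi_of_hasDerivAt_of_nonneg_of_tendsto_nhdsGT
    (fun s hs => hasDerivAt_gxProfile_div_sqrt hx.ne' hs) (fun s _ => gx_nonneg hx.le s)
    (tendsto_gxProfile_atTop.comp (tendsto_div_sqrt_two_mul_nhdsGT_zero hx))
    (tendsto_gxProfile_nhdsGT_zero.comp (tendsto_div_sqrt_two_mul_atTop hx))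
  rw [h, sub_zero]
end
end
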